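/- A ring R is twin-good if and only if R/J(R) is twin-good, where J(R) is the Jacobson radical of R. -/

import Mathlib

/-!
An element of `R` whose image in `R/J(R)` is a unit is already a unit: lifting the inverse
gives `b` with `a * b` and `b * a` in `1 + J(R)`, and elements of `1 + J(R)` are units.
So `R →+* R/J(R)` is a surjective local homomorphism, and being twin-good passes in both
directions along such a map: units map to units, and the units `u`, `x + u`, `x - u` found
in `R/J(R)` for the image of `x` lift to units of `R`.
-/

open Function

namespace TwoSidedIdeal

variable {R : Type*} [Ring R]

theorem exists_mul_eq_one_of_sub_one_mem_jacobson_bot {r : R}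
    (hr : r - 1 ∈ jacobson (⊥ : TwoSidedIdeal R)) :
    ∃ z, z * r = 1 ∧ z - 1 ∈ jacobson (⊥ : TwoSidedIdeal R) := by
  obtain ⟨z, hz⟩ := mem_jacobson_iff.mp hr 1
  have hzr : z * r = 1 := by
    rw [mem_bot, mul_one, mul_sub, mul_one, sub_add_cancel, sub_eq_zero] at hz
    exact hz
  refine ⟨z, hzr, ?_⟩
  have hz1 : z - 1 = -(z * (r - 1)) := by rw [mul_sub, hzr, mul_one, neg_sub]
  exact hz1 ▸ neg_mem _ (mul_mem_left _ z _ hr)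

theorem isUnit_of_sub_one_mem_jacobson_bot {r : R}
    (hr : r - 1 ∈ jacobson (⊥ : TwoSidedIdeal R)) : IsUnit r := by
  obtain ⟨z, hzr, hz⟩ := exists_mul_eq_one_of_sub_one_mem_jacobson_bot hr
  obtain ⟨w, hwz, -⟩ := exists_mul_eq_one_of_sub_one_mem_jacobson_bot hz
  have hwr : w = r := left_inv_eq_right_inv hwz hzr
  exact isUnit_iff_exists_and_exists.mpr ⟨⟨z, hwr ▸ hwz⟩, ⟨z, hzr⟩⟩

theorem isLocalHom_ringCon_mk'_of_le_jacobson {I : TwoSidedIdeal R}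
    (hI : I ≤ jacobson ⊥) : IsLocalHom I.ringCon.mk' := by
  refine ⟨fun a ha => ?_⟩
  obtain ⟨b, hb⟩ := I.ringCon.mk'_surjective ↑ha.unit⁻¹
  have isUnit_of_mk'_eq_one {c : R} (hc : I.ringCon.mk' c = 1) : IsUnit c :=
    isUnit_of_sub_one_mem_jacobson_bot <| hI <| (rel_iff I _ _).mp <| RingCon.eq _ |>.mp hc
  have hab : IsUnit (a * b) := isUnit_of_mk'_eq_one (by rw [map_mul, hb, IsUnit.mul_val_inv])
  have hba : IsUnit (b * a) := isUnit_of_mk'_eq_one (by rw [map_mul, hb, IsUnit.val_inv_mul])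
  refine isUnit_iff_exists_and_exists.mpr ⟨⟨b * ↑hab.unit⁻¹, ?_⟩, ⟨↑hba.unit⁻¹ * b, ?_⟩⟩
  · rw [← mul_assoc, IsUnit.mul_val_inv]
  · rw [mul_assoc, IsUnit.val_inv_mul]

end TwoSidedIdeal

def IsTwinGood (R : Type*) [Ring R] : Prop :=
  ∀ x : R, ∃ u : R, IsUnit u ∧ IsUnit (x + u) ∧ IsUnit (x - u)

namespace IsTwinGood

variable {R S : Type*} [Ring R] [Ring S]

theorem of_surjective (f : R →+* S) (hf : Surjective f) (h : IsTwinGood R) :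
    IsTwinGood S := by
  intro y
  obtain ⟨x, rfl⟩ := hf y
  obtain ⟨u, hu, hxu, hxu'⟩ := h x
  exact ⟨f u, hu.map f, map_add f x u ▸ hxu.map f, map_sub f x u ▸ hxu'.map f⟩

theorem of_surjective_of_isLocalHom (f : R →+* S) [IsLocalHom f] (hf : Surjective f)
    (h : IsTwinGood S) : IsTwinGood R := by
  intro x
  obtain ⟨v, hv, hxv, hxv'⟩ := h (f x)
  obtain ⟨u, rfl⟩ := hf v
  exact ⟨u, hv.of_map, (map_add f x u ▸ hxv).of_map, (map_sub f x u ▸ hxv').of_map⟩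

end IsTwinGood

theorem isTwinGood_iff_of_surjective {R S : Type*} [Ring R] [Ring S] (f : R →+* S)
    [IsLocalHom f] (hf : Surjective f) : IsTwinGood R ↔ IsTwinGood S :=
  ⟨.of_surjective f hf, .of_surjective_of_isLocalHom f hf⟩

/-- A ring `R` is twin-good if and only if `R/J(R)` is twin-good, where `J(R)` is
the Jacobson radical of `R`. -/
theorem twinGood_iff_quotient_jacobson (R : Type*) [Ring R] :
    (∀ x : R, ∃ u : R, IsUnit u ∧ IsUnit (x + u) ∧ IsUnit (x - u)) ↔
    (∀ x : (TwoSidedIdeal.jacobson (⊥ : TwoSidedIdeal R)).ringCon.Quotient,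
      ∃ u : (TwoSidedIdeal.jacobson (⊥ : TwoSidedIdeal R)).ringCon.Quotient,
        IsUnit u ∧ IsUnit (x + u) ∧ IsUnit (x - u)) := by
  have := TwoSidedIdeal.isLocalHom_ringCon_mk'_of_le_jacobson
    (le_refl (TwoSidedIdeal.jacobson (⊥ : TwoSidedIdeal R)))
  exact isTwinGood_iff_of_surjective _ (RingCon.mk'_surjective _)
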